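/- Let n ≥ 2, let GHZ n be the normalized n-qubit GHZ-state, and let S ⊆ Fin n be nonempty with S ≠ Fin n. Then GHZ n does not admit a symmetric move for S: there is an orthonormal basis e of ℂ² (namely the computational basis) such that coeff (GHZ n) e (fun i => if i ∈ S then l else 1 - l) = 0 for every l : Fin 2. (This is the characterization underlying Theorem 2 of the paper: the GHZ-state allows no k-symmetric moves for any proper subset of the processors.) -/

import Mathlib

/-- Coefficient of `ψ` on the product basis vector `⊗ᵢ e (f i)`. -/
noncomputable def coeff {n : ℕ} (ψ : (Fin n → Fin 2) → ℂ)
    (e : Fin 2 → EuclideanSpace ℂ (Fin 2)) (f : Fin n → Fin 2) : ℂ :=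
  ∑ x : Fin n → Fin 2, (∏ i, star ((e (f i)) (x i))) * ψ x

/-- The normalized `n`-qubit GHZ-state: amplitude `1/√2` on constant
computational-basis strings, and `0` elsewhere. -/
noncomputable def GHZstate (n : ℕ) : (Fin n → Fin 2) → ℂ := fun x =>
  if ∀ i j, x i = x j then (1 / Real.sqrt 2 : ℂ) else 0

/-! In the computational basis the coefficient of `ψ` on a pattern is the amplitude of `ψ` at that
pattern. For `S` nonempty and proper the pattern `i ↦ if i ∈ S then l else 1 - l` takes both
values, so it is not constant and the GHZ amplitude there vanishes. -/

theorem coeff_basisFun {n : ℕ} (ψ : (Fin n → Fin 2) → ℂ) (f : Fin n → Fin 2) :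
    coeff ψ (fun j => EuclideanSpace.basisFun (Fin 2) ℂ j) f = ψ f := by
  unfold coeff
  rw [Finset.sum_eq_single f]
  · simp [EuclideanSpace.basisFun_apply]
  · intro x _ hx
    obtain ⟨i, hi⟩ := Function.ne_iff.mp hx
    have hzero : star ((EuclideanSpace.basisFun (Fin 2) ℂ (f i)) (x i)) = 0 := by
      simp [EuclideanSpace.basisFun_apply, Ne.symm hi]
    rw [Finset.prod_eq_zero (Finset.mem_univ i) hzero, zero_mul]
  · simp

theorem GHZstate_eq_zero_of_ne {n : ℕ} {x : Fin n → Fin 2} {i j : Fin n} (h : x i ≠ x j) :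
    GHZstate n x = 0 :=
  if_neg fun hconst => h (hconst i j)

theorem Fin.two_ne_one_sub (l : Fin 2) : l ≠ 1 - l := by
  fin_cases l <;> decide

theorem GHZ_no_proper_symmetric_move_general {n : ℕ}
    (S : Finset (Fin n)) (hS : S.Nonempty) (hS' : S ≠ Finset.univ) :
    ∃ e : OrthonormalBasis (Fin 2) ℂ (EuclideanSpace ℂ (Fin 2)),
      ∀ l : Fin 2,
        coeff (GHZstate n) (fun j => e j) (fun i => if i ∈ S then l else 1 - l) = 0 := by
  refine ⟨EuclideanSpace.basisFun (Fin 2) ℂ, fun l => ?_⟩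
  obtain ⟨a, ha⟩ := hS
  obtain ⟨b, hb⟩ : ∃ b, b ∉ S := by simpa [Finset.eq_univ_iff_forall] using hS'
  rw [coeff_basisFun]
  apply GHZstate_eq_zero_of_ne (i := a) (j := b)
  simpa [ha, hb] using Fin.two_ne_one_sub l

theorem GHZ_no_proper_symmetric_move {n : ℕ} (hn : 2 ≤ n)
    (S : Finset (Fin n)) (hS : S.Nonempty) (hS' : S ≠ Finset.univ) :
    ∃ e : OrthonormalBasis (Fin 2) ℂ (EuclideanSpace ℂ (Fin 2)),
      ∀ l : Fin 2,
        coeff (GHZstate n) (fun j => e j) (fun i => if i ∈ S then l else 1 - l) = 0 :=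
  GHZ_no_proper_symmetric_move_general S hS hS'
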